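/- Let (Y,τ) be a Hausdorff space and let f : (ℕ → ℕ, σ_𝕊) → (Y,τ) be a continuous open surjection. For each finite sequence a of natural numbers set V(a) := f[S(a)], the image of S(a) under f. Then the Souslin scheme V = ⟨V(a)⟩ is a Sorgenfrey base for (Y,τ). -/

import Mathlib

open Set Filter Topology TopologicalSpace Function

noncomputable section

/-- The Sorgenfrey topology on `ℝ`: generated by half-open intervals `[a, b)`. -/
def sorgenfreyTop : TopologicalSpace ℝ :=
  TopologicalSpace.generateFrom {s : Set ℝ | ∃ a b : ℝ, s = Set.Ico a b}

/-- The initial segment `p↾n` of an infinite sequence, as a list. -/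
def restr (p : ℕ → ℕ) (n : ℕ) : List ℕ := (List.range n).map p

/-- `fruit V p = ⋂ n, V (p↾n)`. -/
def fruit {X : Type*} (V : List ℕ → Set X) (p : ℕ → ℕ) : Set X := ⋂ n, V (restr p n)

/-- A Souslin scheme is covering if `V ⟨⟩ = X` and `V a = ⋃ n, V (a ⌢ n)`. -/
def Covering {X : Type*} (V : List ℕ → Set X) : Prop :=
  V [] = Set.univ ∧ ∀ a : List ℕ, V a = ⋃ n : ℕ, V (a ++ [n])

/-- A Souslin scheme is complete if every fruit is nonempty. -/
def CompleteScheme {X : Type*} (V : List ℕ → Set X) : Prop :=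
  ∀ q : ℕ → ℕ, (fruit V q).Nonempty

/-- A Souslin scheme has strict branches if every fruit is a singleton. -/
def StrictBranches {X : Type*} (V : List ℕ → Set X) : Prop :=
  ∀ q : ℕ → ℕ, ∃ x : X, fruit V q = {x}

/-- A Souslin scheme is locally strict. -/
def LocallyStrict {X : Type*} (V : List ℕ → Set X) : Prop :=
  (∀ a : List ℕ, V a = ⋃ n : ℕ, V (a ++ [n])) ∧
  ∀ a : List ℕ, ∀ m k : ℕ, m ≠ k → V (a ++ [m]) ∩ V (a ++ [k]) = ∅

/-- `q ◁ p` for infinite sequences: `q↾n = p↾n` and `q n < p n` for some `n`. -/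
def tri (q p : ℕ → ℕ) : Prop := ∃ n : ℕ, restr q n = restr p n ∧ q n < p n

/-- `q ⊴ p` for infinite sequences. -/
def trieq (q p : ℕ → ℕ) : Prop := tri q p ∨ q = p

/-- `q ◁ s` where `q` is an infinite sequence and `s` a finite one. -/
def triL (q : ℕ → ℕ) (s : List ℕ) : Prop :=
  ∃ n : ℕ, ∃ h : n < s.length, restr q n = s.take n ∧ q n < s.get ⟨n, h⟩

/-- `rsequences(q, n) = {p | q ◁ p ∧ q↾n = p↾n}`. -/
def rsequences (q : ℕ → ℕ) (n : ℕ) : Set (ℕ → ℕ) :=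
  {p | tri q p ∧ restr q n = restr p n}

/-- `rsubtree(q, n)`: finite sequences `s` such that `q↾n ⊏ s` and `q ◁ s`. -/
def rsubtree (q : ℕ → ℕ) (n : ℕ) : Set (List ℕ) :=
  {s | restr q n <+: s ∧ restr q n ≠ s ∧ triL q s}

/-- `cut(V, q, n) = ⋃ {fruit(V, p) : p ∈ rsequences(q, n)}`. -/
def cut {X : Type*} (V : List ℕ → Set X) (q : ℕ → ℕ) (n : ℕ) : Set X :=
  ⋃ p ∈ rsequences q n, fruit V p

/-- `branches(V, x) = {q | x ∈ fruit(V, q)}`. -/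
def branches {X : Type*} (V : List ℕ → Set X) (x : X) : Set (ℕ → ℕ) :=
  {q | x ∈ fruit V q}

/-- `q` is a `τ`-base branch of `x` in `V`: `q ∈ branches(V, x)` and
`{cut(V, q, m) ∪ {x} : m ∈ ℕ}` is a neighborhood base of open sets at `x`. -/
def IsBaseBranch {X : Type*} (τ : TopologicalSpace X) (V : List ℕ → Set X)
    (q : ℕ → ℕ) (x : X) : Prop :=
  x ∈ fruit V q ∧ (∀ m : ℕ, IsOpen[τ] (cut V q m ∪ {x})) ∧
    (@nhds X τ x).HasBasis (fun _ : ℕ => True) (fun m : ℕ => cut V q m ∪ {x})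

/-- `BB(V, x, τ)`: the set of `τ`-base branches of `x` in `V`. -/
def BB {X : Type*} (τ : TopologicalSpace X) (V : List ℕ → Set X) (x : X) : Set (ℕ → ℕ) :=
  {q | IsBaseBranch τ V q x}

/-- A Sorgenfrey base for a space: an open complete covering Souslin scheme
satisfying (S1) and (S2). -/
def IsSorgenfreyBase {X : Type*} (τ : TopologicalSpace X) (V : List ℕ → Set X) : Prop :=
  (∀ a : List ℕ, IsOpen[τ] (V a)) ∧ CompleteScheme V ∧ Covering V ∧
  (∀ x : X, ∀ q ∈ branches V x, ∀ n : ℕ, ∃ t ∈ BB τ V x, restr t n = restr q n) ∧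
  (∀ q : ℕ → ℕ, ∃ z : X, q ∈ BB τ V z)

/-- The Souslin scheme `S` on the Baire set: `S a = {p | a ⊑ p}`. -/
def SchemeS (a : List ℕ) : Set (ℕ → ℕ) := {p | restr p a.length = a}

/-- The topology `σ_𝕊` on `ℕ → ℕ` generated by the base
`{cut(S, p, n) ∪ {p} : p ∈ ℕ → ℕ, n ∈ ℕ}`. -/
def sigmaS : TopologicalSpace (ℕ → ℕ) :=
  TopologicalSpace.generateFrom
    {U : Set (ℕ → ℕ) | ∃ p : ℕ → ℕ, ∃ n : ℕ, U = cut SchemeS p n ∪ {p}}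

/-!
A point `q` of the Baire set is a base branch of itself for the scheme `S`: the sets
`cut(S, q, n) ∪ {q}` are exactly the basic `σ_𝕊`-neighbourhoods of `q`. Since `f` is continuous
and open, it carries the neighbourhood filter of `q` onto that of `f q`, so the images
`f[cut(S, q, n) ∪ {q}] = cut(V, q, n) ∪ {f q}` form an open neighbourhood base at `f q`. Hence every
`q` is a base branch of `f q` in `V`, which gives (S2); (S1) follows because every branch of `x`
agrees to any finite depth with some `t` such that `f t = x`.
-/

lemma restr_length (p : ℕ → ℕ) (n : ℕ) : (restr p n).length = n := by simp [restr]

lemma restr_eq_restr_iff {p r : ℕ → ℕ} {n : ℕ} :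
    restr p n = restr r n ↔ ∀ i < n, p i = r i := by
  simp [restr]

lemma restr_eq_restr_of_le {p r : ℕ → ℕ} {m n : ℕ} (hmn : m ≤ n) (h : restr p n = restr r n) :
    restr p m = restr r m :=
  restr_eq_restr_iff.2 fun i hi => restr_eq_restr_iff.1 h i (hi.trans_le hmn)

lemma restr_succ (p : ℕ → ℕ) (n : ℕ) : restr p (n + 1) = restr p n ++ [p n] := by
  simp [restr, List.range_succ]

lemma mem_schemeS_restr_iff {r p : ℕ → ℕ} {n : ℕ} :
    r ∈ SchemeS (restr p n) ↔ restr r n = restr p n := by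
  rw [SchemeS, mem_ofPred_eq, restr_length]

lemma mem_schemeS_restr (p : ℕ → ℕ) (n : ℕ) : p ∈ SchemeS (restr p n) :=
  mem_schemeS_restr_iff.2 rfl

lemma schemeS_nil : SchemeS [] = univ := by
  ext p
  simp [SchemeS, restr]

lemma schemeS_eq_iUnion_append (a : List ℕ) : SchemeS a = ⋃ n, SchemeS (a ++ [n]) := by
  ext p
  simp only [mem_iUnion, SchemeS, mem_ofPred_eq, List.length_append, List.length_singleton,
    restr_succ]
  constructor
  · intro h
    exact ⟨p a.length, by rw [h]⟩
  · rintro ⟨n, h⟩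
    have := congrArg (List.take a.length) h
    rwa [List.take_left, List.take_left' (restr_length p a.length)] at this

lemma fruit_schemeS (p : ℕ → ℕ) : fruit SchemeS p = {p} := by
  ext r
  simp only [fruit, mem_iInter, mem_singleton_iff]
  refine ⟨fun h => funext fun i => ?_, fun h n => h ▸ mem_schemeS_restr r n⟩
  exact restr_eq_restr_iff.1 (mem_schemeS_restr_iff.1 (h (i + 1))) i i.lt_succ_self

lemma cut_schemeS (q : ℕ → ℕ) (n : ℕ) : cut SchemeS q n = rsequences q n := by
  simp [cut, fruit_schemeS]

lemma rsequences_antitone (q : ℕ → ℕ) : Antitone (rsequences q) :=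
  fun _ _ hmn _ hp => ⟨hp.1, restr_eq_restr_of_le hmn hp.2⟩

lemma exists_le_of_tri {q p : ℕ → ℕ} {m : ℕ} (h : tri q p) (hm : restr q m = restr p m) :
    ∃ j, m ≤ j ∧ restr q j = restr p j ∧ q j < p j := by
  obtain ⟨j, hj, hlt⟩ := h
  refine ⟨j, le_of_not_gt fun hjm => hlt.ne ?_, hj, hlt⟩
  exact restr_eq_restr_iff.1 hm j hjm

/-- `rsequences q m` is open in the product topology. -/
lemma exists_schemeS_restr_subset_rsequences {q p : ℕ → ℕ} {m : ℕ} (hp : p ∈ rsequences q m) :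
    ∃ k, SchemeS (restr p k) ⊆ rsequences q m := by
  obtain ⟨j, hmj, hj, hlt⟩ := exists_le_of_tri hp.1 hp.2
  refine ⟨j + 1, fun r hr => ?_⟩
  have hpr : restr p (j + 1) = restr r (j + 1) := (mem_schemeS_restr_iff.1 hr).symm
  refine ⟨⟨j, hj.trans (restr_eq_restr_of_le j.le_succ hpr), ?_⟩,
    hp.2.trans (restr_eq_restr_of_le (hmj.trans j.le_succ) hpr)⟩
  rwa [← restr_eq_restr_iff.1 hpr j j.lt_succ_self]

lemma rsequences_union_singleton_subset_schemeS (p : ℕ → ℕ) (n : ℕ) :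
    rsequences p n ∪ {p} ⊆ SchemeS (restr p n) := by
  rintro r (hr | rfl)
  · exact mem_schemeS_restr_iff.2 hr.2.symm
  · exact mem_schemeS_restr r n

lemma exists_rsequences_union_singleton_subset {p r : ℕ → ℕ} {n : ℕ}
    (hr : r ∈ rsequences p n ∪ {p}) : ∃ k, rsequences r k ∪ {r} ⊆ rsequences p n ∪ {p} := by
  rcases hr with hr | rfl
  · obtain ⟨k, hk⟩ := exists_schemeS_restr_subset_rsequences hr
    exact ⟨k, (rsequences_union_singleton_subset_schemeS r k).trans (hk.trans subset_union_left)⟩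
  · exact ⟨n, subset_rfl⟩

section SigmaS

attribute [local instance] sigmaS

lemma isTopologicalBasis_sigmaS :
    IsTopologicalBasis {U : Set (ℕ → ℕ) | ∃ p : ℕ → ℕ, ∃ n : ℕ, U = cut SchemeS p n ∪ {p}} := by
  refine ⟨?_, ?_, rfl⟩
  · rintro _ ⟨p₁, n₁, rfl⟩ _ ⟨p₂, n₂, rfl⟩ r ⟨hr₁, hr₂⟩
    rw [cut_schemeS] at hr₁ hr₂
    obtain ⟨k₁, hk₁⟩ := exists_rsequences_union_singleton_subset hr₁
    obtain ⟨k₂, hk₂⟩ := exists_rsequences_union_singleton_subset hr₂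
    have hmono : ∀ k ≤ max k₁ k₂, rsequences r (max k₁ k₂) ∪ {r} ⊆ rsequences r k ∪ {r} :=
      fun k hk => union_subset_union_left _ (rsequences_antitone r hk)
    refine ⟨cut SchemeS r (max k₁ k₂) ∪ {r}, ⟨r, _, rfl⟩, Or.inr rfl, ?_⟩
    rw [cut_schemeS, cut_schemeS, cut_schemeS]
    exact subset_inter ((hmono _ (le_max_left _ _)).trans hk₁)
      ((hmono _ (le_max_right _ _)).trans hk₂)
  · exact eq_univ_of_forall fun p => mem_sUnion.2 ⟨_, ⟨p, 0, rfl⟩, Or.inr rfl⟩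

lemma isOpen_cut_schemeS_union_singleton (p : ℕ → ℕ) (n : ℕ) : IsOpen (cut SchemeS p n ∪ {p}) :=
  isTopologicalBasis_sigmaS.isOpen ⟨p, n, rfl⟩

lemma hasBasis_nhds_sigmaS (p : ℕ → ℕ) :
    (𝓝 p).HasBasis (fun _ : ℕ => True) (fun n => cut SchemeS p n ∪ {p}) := by
  refine isTopologicalBasis_sigmaS.nhds_hasBasis.to_hasBasis ?_ fun n _ =>
    ⟨_, ⟨⟨p, n, rfl⟩, Or.inr rfl⟩, subset_rfl⟩
  rintro _ ⟨⟨p', n', rfl⟩, hp⟩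
  rw [cut_schemeS] at hp
  obtain ⟨k, hk⟩ := exists_rsequences_union_singleton_subset hp
  exact ⟨k, trivial, by rwa [cut_schemeS, cut_schemeS]⟩

lemma isOpen_schemeS (a : List ℕ) : IsOpen (SchemeS a) := by
  refine isOpen_iff_mem_nhds.2 fun p hp => (hasBasis_nhds_sigmaS p).mem_iff.2 ⟨a.length, trivial, ?_⟩
  have ha : restr p a.length = a := hp
  rw [cut_schemeS]
  simpa only [ha] using rsequences_union_singleton_subset_schemeS p a.length

end SigmaS

section Image

variable {Y : Type*} (f : (ℕ → ℕ) → Y)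

lemma mem_fruit_image_schemeS (q : ℕ → ℕ) : f q ∈ fruit (fun a => f '' SchemeS a) q :=
  mem_iInter.2 fun n => mem_image_of_mem f (mem_schemeS_restr q n)

lemma cut_image_schemeS_union_singleton (q : ℕ → ℕ) (m : ℕ) :
    cut (fun a => f '' SchemeS a) q m ∪ {f q} = f '' (cut SchemeS q m ∪ {q}) := by
  rw [image_union, image_singleton, cut_schemeS]
  congr 1
  refine Subset.antisymm ?_ fun _ ⟨p, hp, hy⟩ => mem_biUnion hp (hy ▸ mem_fruit_image_schemeS f p)
  simp only [cut, iUnion_subset_iff]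
  intro p hp y hy
  obtain ⟨k, hk⟩ := exists_schemeS_restr_subset_rsequences hp
  exact image_mono hk (mem_iInter.1 hy k)

attribute [local instance] sigmaS

lemma isBaseBranch_image_schemeS [TopologicalSpace Y] (hc : Continuous f) (ho : IsOpenMap f)
    (q : ℕ → ℕ) : IsBaseBranch ‹_› (fun a => f '' SchemeS a) q (f q) := by
  refine ⟨mem_fruit_image_schemeS f q, fun m => ?_, ?_⟩
  · rw [cut_image_schemeS_union_singleton]
    exact ho _ (isOpen_cut_schemeS_union_singleton q m)
  · rw [← ho.map_nhds_eq hc.continuousAt]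
    simpa only [cut_image_schemeS_union_singleton] using (hasBasis_nhds_sigmaS q).map f

end Image

theorem stmt3_general {Y : Type*} (τ : TopologicalSpace Y)
    (f : (ℕ → ℕ) → Y) (hc : @Continuous (ℕ → ℕ) Y sigmaS τ f)
    (ho : @IsOpenMap (ℕ → ℕ) Y sigmaS τ f) (hs : Function.Surjective f) :
    IsSorgenfreyBase τ (fun a : List ℕ => f '' SchemeS a) := by
  have hBB (q : ℕ → ℕ) : q ∈ BB τ (fun a => f '' SchemeS a) (f q) :=
    isBaseBranch_image_schemeS f hc ho q
  refine ⟨fun a => ho _ (isOpen_schemeS a), fun q => ⟨f q, mem_fruit_image_schemeS f q⟩,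
    ⟨?_, fun a => ?_⟩, fun x q hq n => ?_, fun q => ⟨f q, hBB q⟩⟩
  · simp only [schemeS_nil, image_univ, hs.range_eq]
  · simp only [schemeS_eq_iUnion_append a, image_iUnion]
  · obtain ⟨t, ht, rfl⟩ := mem_iInter.1 hq n
    exact ⟨t, hBB t, mem_schemeS_restr_iff.1 ht⟩

/-- If `f : (ℕ → ℕ, σ_𝕊) → (Y, τ)` is a continuous open surjection onto a Hausdorff
space, then `⟨f[S a]⟩ₐ` is a Sorgenfrey base for `(Y, τ)`. -/
theorem stmt3 {Y : Type*} (τ : TopologicalSpace Y) (hT2 : @T2Space Y τ)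
    (f : (ℕ → ℕ) → Y) (hc : @Continuous (ℕ → ℕ) Y sigmaS τ f)
    (ho : @IsOpenMap (ℕ → ℕ) Y sigmaS τ f) (hs : Function.Surjective f) :
    IsSorgenfreyBase τ (fun a : List ℕ => f '' SchemeS a) :=
  stmt3_general τ f hc ho hs
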